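/- arXiv:1307.6893 — 2 statements merged into one kernel-verified Lean document; each statement's English description precedes it below -/
import Mathlib

section
/- Let α ∈ ℝ be badly approximable: there exists ε > 0 such that |α − p/q| > ε/q² for all integers p and all nonzero integers q. Then 0 is not an accumulation point of the values of the quadratic form Q(x₁,x₂) = x₁² − α²x₂² on ℤ²: there exists δ > 0 such that for all integers p, q with (p,q) ≠ (0,0), one has |p² − α²q²| ≥ δ. -/
/-!
Write `p² - α²q² = (p + αq)(p - αq)`. For `q ≠ 0`, bad approximability at `p/q` and `-p/q`
puts both factors above `ε/|q|`, while their sum is at least `2|α||q|`; so the larger factor is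
at least `|α||q|` and the product is at least `ε|α| ≥ ε²` (`ε < |α|` is bad approximability at
`0/1`). For `q = 0` the value is `p² ≥ 1`.
-/

theorem div_abs_lt_abs_sub_mul_of_lt_abs_sub_div {α ε x q : ℝ} (hq : q ≠ 0)
    (h : ε / q ^ 2 < |α - x / q|) : ε / |q| < |x - α * q| := by
  have hq' : 0 < |q| := abs_pos.mpr hq
  have hsub : |x - α * q| = |q| * |α - x / q| := by
    rw [← abs_mul, ← abs_neg]; congr 1; field_simp; ring
  have hdiv : ε / |q| = |q| * (ε / q ^ 2) := by
    rw [← sq_abs]; field_simp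
  rw [hsub, hdiv]
  exact mul_lt_mul_of_pos_left h hq'

theorem mul_le_mul_of_lt_of_lt_of_two_mul_le_add {a b c d : ℝ} (hc : 0 ≤ c) (ha : c < a)
    (hb : c < b) (hd : 2 * d ≤ a + b) : c * d ≤ a * b := by
  rcases le_total a b with hab | hab <;> nlinarith

theorem sq_le_abs_sq_sub_sq_mul_sq_of_forall_lt_abs_sub_div {α ε : ℝ} (hε : 0 ≤ ε)
    (hαε : ε ≤ |α|)
    (h : ∀ p q : ℤ, q ≠ 0 → ε / (q : ℝ) ^ 2 < |α - (p : ℝ) / (q : ℝ)|) {p q : ℤ} (hq : q ≠ 0) :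
    ε ^ 2 ≤ |(p : ℝ) ^ 2 - α ^ 2 * (q : ℝ) ^ 2| := by
  have hq' : (q : ℝ) ≠ 0 := Int.cast_ne_zero.mpr hq
  have hminus : ε / |(q : ℝ)| < |p - α * q| :=
    div_abs_lt_abs_sub_mul_of_lt_abs_sub_div hq' (h p q hq)
  have hplus : ε / |(q : ℝ)| < |p + α * q| := by
    have := div_abs_lt_abs_sub_mul_of_lt_abs_sub_div hq' (h (-p) q hq)
    rwa [Int.cast_neg, show -(p : ℝ) - α * q = -(p + α * q) by ring, abs_neg] at this
  have hsum : 2 * (|α| * |(q : ℝ)|) ≤ |p + α * q| + |p - α * q| := by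
    calc 2 * (|α| * |(q : ℝ)|) = |(p + α * q) - (p - α * q)| := by
          rw [← abs_mul, ← abs_two, ← abs_mul]; ring_nf
      _ ≤ _ := abs_sub _ _
  calc ε ^ 2 ≤ ε / |(q : ℝ)| * (|α| * |(q : ℝ)|) := by
        rw [show ε / |(q : ℝ)| * (|α| * |(q : ℝ)|) = ε * |α| by field_simp, sq]
        exact mul_le_mul_of_nonneg_left hαε hε
    _ ≤ |p + α * q| * |p - α * q| :=
        mul_le_mul_of_lt_of_lt_of_two_mul_le_add (by positivity) hplus hminus hsum
    _ = |(p : ℝ) ^ 2 - α ^ 2 * (q : ℝ) ^ 2| := by rw [← abs_mul]; ring_nf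

/-- If `α` is badly approximable, then `0` is not an accumulation point of the values
of the quadratic form `Q(x₁,x₂) = x₁² - α²x₂²` at nonzero integer points. -/
theorem badly_approximable_quadratic_form_bounded_away (α : ℝ)
    (hα : ∃ ε : ℝ, 0 < ε ∧ ∀ (p : ℤ) (q : ℤ), q ≠ 0 →
      ε / (q : ℝ) ^ 2 < |α - (p : ℝ) / (q : ℝ)|) :
    ∃ δ : ℝ, 0 < δ ∧ ∀ (p : ℤ) (q : ℤ), ¬(p = 0 ∧ q = 0) →
      δ ≤ |(p : ℝ) ^ 2 - α ^ 2 * (q : ℝ) ^ 2| := by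
  obtain ⟨ε, hε, h⟩ := hα
  have hαε : ε < |α| := by simpa using h 0 1 one_ne_zero
  refine ⟨min 1 (ε ^ 2), by positivity, fun p q hpq => ?_⟩
  rcases eq_or_ne q 0 with rfl | hq
  · have hp : 1 ≤ |p| := Int.one_le_abs fun hp => hpq ⟨hp, rfl⟩
    have hp_sq : (1 : ℝ) ≤ (p : ℝ) ^ 2 := by
      exact_mod_cast one_le_sq_iff_one_le_abs _ |>.mpr hp
    simpa [abs_of_nonneg (sq_nonneg (p : ℝ))] using (min_le_left _ _).trans hp_sq
  · exact (min_le_right _ _).trans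
      (sq_le_abs_sq_sub_sq_mul_sq_of_forall_lt_abs_sub_div hε.le hαε.le h hq)
end

section
/- Let g, u ∈ SL(n,ℝ), and suppose that g^{−k} u g^{k} → I (the identity matrix) as k → +∞ along the integers. Then u is unipotent: the matrix u − I is nilpotent, i.e., (u − I)ⁿ = 0. -/
open Matrix MatrixGroups Filter Topology

noncomputable instance {n : ℕ} : TopologicalSpace (Matrix.SpecialLinearGroup (Fin n) ℝ) :=
  instTopologicalSpaceSubtype

/-!
Conjugation preserves the characteristic polynomial, so `u` has the characteristic polynomial
of every `g⁻ᵏ u gᵏ`. Over an infinite field a characteristic polynomial is determined by its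
values, which depend continuously on the matrix, so the matrices with a given characteristic
polynomial form a closed set; passing to the limit, `u` has the characteristic polynomial
`(X - 1)ⁿ` of the identity, and Cayley–Hamilton gives `(u - 1)ⁿ = 0`.
-/

open Polynomial

namespace Matrix

variable {n R : Type*} [Fintype n] [DecidableEq n]

theorem continuous_eval_charpoly [CommRing R] [TopologicalSpace R] [IsTopologicalRing R] (t : R) :
    Continuous fun M : Matrix n n R => M.charpoly.eval t := by
  simp_rw [eval_charpoly]
  exact (continuous_const.sub continuous_id).matrix_det

theorem isClosed_setOf_charpoly_eq [CommRing R] [IsDomain R] [Infinite R] [TopologicalSpace R]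
    [IsTopologicalRing R] [T1Space R] (p : R[X]) :
    IsClosed {M : Matrix n n R | M.charpoly = p} := by
  have hset : {M : Matrix n n R | M.charpoly = p} =
      ⋂ t : R, (fun M : Matrix n n R => M.charpoly.eval t) ⁻¹' {p.eval t} := by
    ext M
    simpa only [Set.mem_iInter, Set.mem_preimage, Set.mem_singleton_iff] using
      ⟨fun h t => h ▸ rfl, Polynomial.funext⟩
  rw [hset]
  exact isClosed_iInter fun t => isClosed_singleton.preimage (continuous_eval_charpoly t)

theorem sub_one_pow_card_eq_zero_of_charpoly_eq [CommRing R] {A : Matrix n n R}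
    (hA : A.charpoly = (X - 1) ^ Fintype.card n) : (A - 1) ^ Fintype.card n = 0 := by
  simpa [hA] using aeval_self_charpoly A

theorem SpecialLinearGroup.charpoly_inv_mul_mul [CommRing R] (g u : SpecialLinearGroup n R) :
    ((g⁻¹ * u * g : SpecialLinearGroup n R) : Matrix n n R).charpoly =
      (u : Matrix n n R).charpoly := by
  rw [SpecialLinearGroup.coe_mul, charpoly_mul_comm, ← SpecialLinearGroup.coe_mul,
    mul_inv_cancel_left]

end Matrix

/-- Every element of a horospherical subgroup is unipotent: if
`g⁻ᵏ u gᵏ → 1` as `k → +∞`, then `u - 1` is nilpotent, i.e. `(u - 1)ⁿ = 0`. -/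
theorem horospherical_element_unipotent (n : ℕ) (g u : SL(n, ℝ))
    (h : Tendsto (fun k : ℕ => g⁻¹ ^ k * u * g ^ k) atTop (𝓝 (1 : SL(n, ℝ)))) :
    ((u : Matrix (Fin n) (Fin n) ℝ) - 1) ^ n = 0 := by
  have hconj : ∀ k : ℕ, ((g⁻¹ ^ k * u * g ^ k : SL(n, ℝ)) : Matrix (Fin n) (Fin n) ℝ).charpoly =
      (u : Matrix (Fin n) (Fin n) ℝ).charpoly := fun k => by
    rw [inv_pow]
    exact SpecialLinearGroup.charpoly_inv_mul_mul _ _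
  have hu : (1 : Matrix (Fin n) (Fin n) ℝ).charpoly = (u : Matrix (Fin n) (Fin n) ℝ).charpoly :=
    (isClosed_setOf_charpoly_eq _).mem_of_tendsto ((continuous_subtype_val.tendsto (1 : SL(n, ℝ))).comp h)
      (Eventually.of_forall hconj)
  simpa using sub_one_pow_card_eq_zero_of_charpoly_eq (hu.symm.trans charpoly_one)
end
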